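/- arXiv:2011.02456 — 2 statements merged into one kernel-verified Lean document; each statement's English description precedes it below -/
import Mathlib

section
/- Suppose f ∈ K[X,X⁻¹] satisfies equation (★) and the support of f is contained in the strictly positive integers (f has only positive powers of X). Then there exists a natural number d ≥ 0 such that f is one of: −u·X^{2d+1} − R_d; v·X^{2d+1} − R_d; Q·X^{2d} − R_d; −X^{2d} − R_d. -/
open LaurentPolynomial

/-- Equation (★): `(X² − 1)·f·f∨ = b·(X²·f∨ − f) − c·(X·f − X·f∨) + Q·(X² − 1)`,
where `Q = u·v`, `c = u − v`, `b = Q − 1` and `f∨` is the image of `f` under the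
`K`-algebra involution of `K[X,X⁻¹]` sending `X` to `X⁻¹`. -/
def SatStar {K : Type*} [Field K] (u v : K) (f : K[T;T⁻¹]) : Prop :=
  (T 2 - 1) * (f * invert f) =
    C (u * v - 1) * (T 2 * invert f - f)
      - C (u - v) * (T 1 * f - T 1 * invert f)
      + C (u * v) * (T 2 - 1)

/-- `R_d = Σ_{j=1}^{d} (b·X^{2j} + c·X^{2j−1})`. -/
noncomputable def Rpoly {K : Type*} [Field K] (u v : K) (d : ℕ) : K[T;T⁻¹] :=
  ∑ j ∈ Finset.range d, (C (u * v - 1) * T (2 * (j : ℤ) + 2) + C (u - v) * T (2 * (j : ℤ) + 1))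

/-!
Equation (★) is invariant under `g ↦ X²·g − b·X² − c·X`, and since `R_{d+1} = X²·R_d + b·X² + c·X`
this map sends each of the four families with parameter `d` to the same family with parameter
`d + 1`. If `f` is supported in `[1, N]` with `f_N ≠ 0`, the coefficients of `X^{1−N}` and
`X^{2−N}` in (★) give `f_N (f_1 + c) = [N = 1]·Q` and
`(f_1 + c) f_{N−1} + (f_2 + b) f_N = [N = 2]·Q`. For `N = 1` and `N = 2` these are quadratic
equations whose roots are the families with `d = 0` and `d = 1`; for `N ≥ 3` they force
`f_1 = −c` and `f_2 = −b`, so `f` is the image of a solution of top degree `N − 2`.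
-/

namespace LaurentPolynomial

variable {R : Type*}

section Semiring

variable [Semiring R]

lemma coeff_C_mul (a : R) (p : R[T;T⁻¹]) (k : ℤ) : (C a * p).coeff k = a * p.coeff k :=
  AddMonoidAlgebra.coeff_single_zero_mul p a k

lemma coeff_T_mul (n : ℤ) (p : R[T;T⁻¹]) (k : ℤ) : (T n * p).coeff k = p.coeff (k - n) := by
  rw [T, AddMonoidAlgebra.coeff_single_mul_apply, one_mul, neg_add_eq_sub]

lemma coeff_eq_zero_of_support_subset {p : R[T;T⁻¹]} {s : Finset ℤ} (h : p.coeff.support ⊆ s)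
    {a : ℤ} (ha : a ∉ s) : p.coeff a = 0 :=
  Finsupp.notMem_support_iff.mp fun h' => ha (h h')

lemma eq_sum_C_mul_T {p : R[T;T⁻¹]} {s : Finset ℤ} (h : p.coeff.support ⊆ s) :
    p = ∑ a ∈ s, C (p.coeff a) * T a := by
  ext k
  simp only [AddMonoidAlgebra.coeff_sum, ← single_eq_C_mul_T, AddMonoidAlgebra.coeff_single]
  have hk : k ∉ s → p.coeff k = 0 := coeff_eq_zero_of_support_subset h
  rw [Finsupp.finsetSum_apply, Finset.sum_eq_single k (fun a _ hak => Finsupp.single_eq_of_ne' hak)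
    (by simpa only [Finsupp.single_eq_same] using hk), Finsupp.single_eq_same]

lemma coeff_mul_eq_sum (p q : R[T;T⁻¹]) (k : ℤ) :
    (p * q).coeff k = ∑ a ∈ p.coeff.support, p.coeff a * q.coeff (k - a) := by
  simp only [AddMonoidAlgebra.coeff_mul_apply_left, Finsupp.sum, neg_add_eq_sub]

lemma coeff_eq_zero_of_lt {q : R[T;T⁻¹]} {n b : ℤ} (hq : ∀ b ∈ q.coeff.support, n ≤ b)
    (hb : b < n) : q.coeff b = 0 :=
  Finsupp.notMem_support_iff.mp fun h => hb.not_ge (hq b h)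

section LowDegree

variable {p q : R[T;T⁻¹]} {m n : ℤ} (hp : ∀ a ∈ p.coeff.support, m ≤ a)
  (hq : ∀ b ∈ q.coeff.support, n ≤ b)
include hp hq

lemma coeff_mul_eq_zero_of_lt {k : ℤ} (hk : k < m + n) : (p * q).coeff k = 0 := by
  rw [coeff_mul_eq_sum]
  refine Finset.sum_eq_zero fun a ha => ?_
  rw [coeff_eq_zero_of_lt hq (by linarith [hp a ha]), mul_zero]

lemma coeff_mul_add : (p * q).coeff (m + n) = p.coeff m * q.coeff n := by
  rw [coeff_mul_eq_sum, Finset.sum_eq_single m]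
  · rw [add_sub_cancel_left]
  · intro a ha ham
    rw [coeff_eq_zero_of_lt hq (by linarith [lt_of_le_of_ne (hp a ha) (Ne.symm ham)]), mul_zero]
  · intro hm
    rw [Finsupp.notMem_support_iff.mp hm, zero_mul]

lemma coeff_mul_add_add_one :
    (p * q).coeff (m + n + 1) = p.coeff m * q.coeff (n + 1) + p.coeff (m + 1) * q.coeff n := by
  rw [coeff_mul_eq_sum, Finset.sum_eq_add m (m + 1) (by omega)]
  · congr 3 <;> ring
  · intro a ha ⟨ham, ham1⟩
    rw [coeff_eq_zero_of_lt hq (by have := hp a ha; omega), mul_zero]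
  · intro hm
    rw [Finsupp.notMem_support_iff.mp hm, zero_mul]
  · intro hm
    rw [Finsupp.notMem_support_iff.mp hm, zero_mul]

end LowDegree

end Semiring

section CommSemiring

variable [CommSemiring R]

lemma support_invert_subset_Icc {p : R[T;T⁻¹]} {m n : ℤ} (h : p.coeff.support ⊆ Finset.Icc m n) :
    (invert p).coeff.support ⊆ Finset.Icc (-n) (-m) := by
  intro b hb
  have := Finset.mem_Icc.mp (h (by simpa using hb))
  rw [Finset.mem_Icc]
  omega

end CommSemiring

section CommRing

variable [CommRing R]

lemma exists_eq_T_two_mul_sub {p : R[T;T⁻¹]} {N : ℤ} {b c : R}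
    (hsupp : p.coeff.support ⊆ Finset.Icc 1 N) (hN : 2 < N) (h1 : p.coeff 1 = -c)
    (h2 : p.coeff 2 = -b) :
    ∃ q : R[T;T⁻¹], p = T 2 * q - C b * T 2 - C c * T 1 ∧
      q.coeff.support ⊆ Finset.Icc 1 (N - 2) ∧ q.coeff (N - 2) = p.coeff N := by
  set q := T (-2) * (p + C b * T 2 + C c * T 1)
  have hq : ∀ k, q.coeff k = p.coeff (k + 2) + (if 2 = k + 2 then b else 0)
      + (if 1 = k + 2 then c else 0) := by
    intro k
    simp only [q, coeff_T_mul, AddMonoidAlgebra.coeff_add, Finsupp.coe_add, Pi.add_apply,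
      coeff_C_mul, T_apply, mul_ite, mul_one, mul_zero, sub_neg_eq_add]
  refine ⟨q, ?_, fun k hk => ?_, ?_⟩
  · rw [← mul_assoc, ← T_add, add_neg_cancel, T_zero, one_mul]
    ring
  · rw [Finsupp.mem_support_iff, hq] at hk
    rcases eq_or_ne k 0 with rfl | hk0
    · simp [h2] at hk
    rcases eq_or_ne k (-1) with rfl | hk1
    · norm_num [h1] at hk
    rw [if_neg (by omega), if_neg (by omega), add_zero, add_zero] at hk
    have := Finset.mem_Icc.mp (hsupp (Finsupp.mem_support_iff.mpr hk))
    rw [Finset.mem_Icc]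
    omega
  · rw [hq, if_neg (by omega), if_neg (by omega), sub_add_cancel]
    ring

end CommRing

end LaurentPolynomial

section Star

variable {K : Type*} [Field K] {u v : K}

lemma satStar_shift_iff (g : K[T;T⁻¹]) :
    SatStar u v (T 2 * g - C (u * v - 1) * T 2 - C (u - v) * T 1) ↔ SatStar u v g := by
  have hT2 : (T 2 : K[T;T⁻¹]) = T 1 * T 1 := by rw [← T_add]; norm_num
  have hT2' : (T (-2) : K[T;T⁻¹]) = T (-1) * T (-1) := by rw [← T_add]; norm_num
  have hinv : (T 1 : K[T;T⁻¹]) * T (-1) = 1 := by rw [← T_add]; norm_num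
  unfold SatStar
  set b : K[T;T⁻¹] := C (u * v - 1)
  set c : K[T;T⁻¹] := C (u - v)
  have hb : invert b = b := invert_C _
  have hc : invert c = c := invert_C _
  simp only [map_sub, map_mul, invert_T, hb, hc]
  rw [hT2, hT2']
  set x : K[T;T⁻¹] := T 1
  set y : K[T;T⁻¹] := T (-1)
  set A := g - b
  set B := invert g - b
  -- both sides of (★) for the shifted polynomial and for `g` differ by this multiple of `X·X⁻¹ − 1`
  have key : (A * B * (x * x - 1) * (x * y + 1) - c * A * x * (x * x - 1) - c * x * B * (x * y + 1)
      + c ^ 2 * x * x - b * B * (x * y + 1) + b * c * x) * (x * y - 1) = 0 := by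
    rw [hinv, sub_self, mul_zero]
  constructor <;> intro h
  · linear_combination h - key
  · linear_combination h + key

lemma SatStar.coeff_eq {f : K[T;T⁻¹]} (hf : SatStar u v f) (k : ℤ) :
    (f * invert f).coeff (k - 2) - (f * invert f).coeff k
      = (u * v - 1) * (f.coeff (2 - k) - f.coeff k) - (u - v) * (f.coeff (k - 1) - f.coeff (1 - k))
        + u * v * ((if 2 = k then 1 else 0) - if 0 = k then 1 else 0) := by
  have h := congrArg (fun p => p.coeff k) hf
  simpa only [sub_mul, one_mul, AddMonoidAlgebra.coeff_sub, AddMonoidAlgebra.coeff_add,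
    Pi.sub_apply, Pi.add_apply, Finsupp.coe_sub, Finsupp.coe_add, coeff_C_mul, coeff_T_mul,
    invert_apply, T_apply, neg_sub, ← T_zero, sub_zero] using h

section LeadingRelations

variable {f : K[T;T⁻¹]} {N : ℤ} (hf : SatStar u v f) (hsupp : f.coeff.support ⊆ Finset.Icc 1 N)
include hf hsupp

lemma SatStar.coeff_top_mul (hN : 0 < N) :
    f.coeff N * (f.coeff 1 + (u - v)) = if N = 1 then u * v else 0 := by
  have hout : ∀ a, (a < 1 ∨ N < a) → f.coeff a = 0 := fun a ha =>
    coeff_eq_zero_of_support_subset hsupp (by rw [Finset.mem_Icc]; omega)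
  have hlow : ∀ a ∈ f.coeff.support, 1 ≤ a := fun a ha => (Finset.mem_Icc.mp (hsupp ha)).1
  have hlow' : ∀ b ∈ (invert f).coeff.support, -N ≤ b := fun b hb =>
    (Finset.mem_Icc.mp (support_invert_subset_Icc hsupp hb)).1
  have h0 : (f * invert f).coeff (1 - N - 2) = 0 := coeff_mul_eq_zero_of_lt hlow hlow' (by omega)
  have h1 : (f * invert f).coeff (1 - N) = f.coeff 1 * f.coeff N := by
    simpa only [invert_apply, neg_neg, ← sub_eq_add_neg] using coeff_mul_add hlow hlow'
  have e := hf.coeff_eq (1 - N)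
  rw [h0, h1, hout (2 - (1 - N)) (by omega), hout (1 - N) (by omega), hout (1 - N - 1) (by omega),
    sub_sub_cancel, if_neg (by omega)] at e
  split_ifs at e ⊢ <;> first | omega | linear_combination -e

lemma SatStar.coeff_top_sub_one_mul (hN : 1 < N) :
    (f.coeff 1 + (u - v)) * f.coeff (N - 1) + (f.coeff 2 + (u * v - 1)) * f.coeff N
      = if N = 2 then u * v else 0 := by
  have hout : ∀ a, (a < 1 ∨ N < a) → f.coeff a = 0 := fun a ha =>
    coeff_eq_zero_of_support_subset hsupp (by rw [Finset.mem_Icc]; omega)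
  have hlow : ∀ a ∈ f.coeff.support, 1 ≤ a := fun a ha => (Finset.mem_Icc.mp (hsupp ha)).1
  have hlow' : ∀ b ∈ (invert f).coeff.support, -N ≤ b := fun b hb =>
    (Finset.mem_Icc.mp (support_invert_subset_Icc hsupp hb)).1
  have h0 : (f * invert f).coeff (2 - N - 2) = 0 := coeff_mul_eq_zero_of_lt hlow hlow' (by omega)
  have h1 : (f * invert f).coeff (2 - N) = f.coeff 1 * f.coeff (N - 1) + f.coeff 2 * f.coeff N := by
    rw [show 2 - N = 1 + -N + 1 by ring, coeff_mul_add_add_one hlow hlow', invert_apply,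
      invert_apply]
    ring_nf
  have e := hf.coeff_eq (2 - N)
  rw [h0, h1, sub_sub_cancel, hout (2 - N) (by omega), hout (2 - N - 1) (by omega),
    show 1 - (2 - N) = N - 1 by ring, if_neg (by omega)] at e
  split_ifs at e ⊢ <;> first | omega | linear_combination -e

end LeadingRelations

lemma Rpoly_succ (u v : K) (d : ℕ) :
    Rpoly u v (d + 1) = T 2 * Rpoly u v d + C (u * v - 1) * T 2 + C (u - v) * T 1 := by
  simp only [Rpoly, Finset.sum_range_succ', Finset.mul_sum, Nat.cast_add, Nat.cast_one,
    Nat.cast_zero, mul_zero, zero_add, ← add_assoc]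
  congr 2
  refine Finset.sum_congr rfl fun j _ => ?_
  rw [mul_add (T 2), mul_left_comm (T 2), ← T_add, mul_left_comm (T 2), ← T_add]
  ring_nf

def IsStarFamily (u v : K) (f : K[T;T⁻¹]) : Prop :=
  ∃ d : ℕ,
    f = -(C u) * T (2 * (d : ℤ) + 1) - Rpoly u v d ∨
    f = C v * T (2 * (d : ℤ) + 1) - Rpoly u v d ∨
    f = C (u * v) * T (2 * (d : ℤ)) - Rpoly u v d ∨
    f = -T (2 * (d : ℤ)) - Rpoly u v d

lemma IsStarFamily.shift {g : K[T;T⁻¹]} (h : IsStarFamily u v g) :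
    IsStarFamily u v (T 2 * g - C (u * v - 1) * T 2 - C (u - v) * T 1) := by
  obtain ⟨d, hd⟩ := h
  refine ⟨d + 1, ?_⟩
  have hodd : (T (2 * ((d + 1 : ℕ) : ℤ) + 1) : K[T;T⁻¹]) = T 2 * T (2 * (d : ℤ) + 1) := by
    rw [← T_add]; push_cast; ring_nf
  have heven : (T (2 * ((d + 1 : ℕ) : ℤ)) : K[T;T⁻¹]) = T 2 * T (2 * (d : ℤ)) := by
    rw [← T_add]; push_cast; ring_nf
  rw [hodd, heven, Rpoly_succ]
  rcases hd with rfl | rfl | rfl | rfl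
  exacts [.inl (by ring), .inr (.inl (by ring)), .inr (.inr (.inl (by ring))),
    .inr (.inr (.inr (by ring)))]

lemma isStarFamily_C_mul_T_one {a : K} (h : (a + u) * (a - v) = 0) :
    IsStarFamily u v (C a * T 1) := by
  refine ⟨0, ?_⟩
  rcases mul_eq_zero.mp h with h | h
  · left
    rw [eq_neg_of_add_eq_zero_left h]
    simp [Rpoly]
  · right; left
    rw [sub_eq_zero.mp h]
    simp [Rpoly]

lemma isStarFamily_C_mul_T_one_add_C_mul_T_two {a : K} (h : (a - 1) * (a + u * v) = 0) :
    IsStarFamily u v (C (-(u - v)) * T 1 + C a * T 2) := by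
  refine ⟨1, Or.inr (Or.inr ?_)⟩
  simp only [Rpoly, Finset.sum_range_one, Nat.cast_zero, Nat.cast_one, mul_zero, zero_add, mul_one,
    map_sub, map_neg, map_mul, map_one]
  rcases mul_eq_zero.mp h with h | h
  · left
    rw [sub_eq_zero.mp h, map_one]
    ring
  · right
    rw [eq_neg_of_add_eq_zero_left h]
    simp only [map_neg, map_mul]
    ring

lemma SatStar.isStarFamily_zero (hf : SatStar u v 0) : IsStarFamily u v 0 := by
  have huv : u * v = 0 := by simpa using hf.coeff_eq 2
  exact ⟨0, .inr (.inr (.inl (by simp [Rpoly, huv])))⟩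

theorem SatStar.isStarFamily_of_support_subset_Icc (N : ℕ) :
    ∀ f : K[T;T⁻¹], SatStar u v f → f.coeff.support ⊆ Finset.Icc 1 (N : ℤ) → f.coeff N ≠ 0 →
      IsStarFamily u v f := by
  induction N using Nat.strong_induction_on with
  | _ N ih =>
  intro f hf hsupp hfN
  obtain rfl | hN1 : N = 1 ∨ 1 < N := by
    by_contra! h
    exact hfN (coeff_eq_zero_of_support_subset hsupp (by simp; omega))
  · rw [Nat.cast_one] at hsupp
    have htop := hf.coeff_top_mul hsupp one_pos
    rw [if_pos rfl] at htop
    rw [eq_sum_C_mul_T hsupp, Finset.Icc_self, Finset.sum_singleton]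
    exact isStarFamily_C_mul_T_one (by linear_combination htop)
  have htop := hf.coeff_top_mul hsupp (by omega)
  have h1 : f.coeff 1 = -(u - v) := by
    rw [if_neg (by omega)] at htop
    linear_combination (mul_eq_zero.mp htop).resolve_left hfN
  have hnext := hf.coeff_top_sub_one_mul hsupp (by omega)
  rw [h1, neg_add_cancel, zero_mul, zero_add] at hnext
  obtain rfl | hN2 : N = 2 ∨ 2 < N := by omega
  · rw [Nat.cast_ofNat] at hsupp hnext
    rw [if_pos rfl] at hnext
    rw [eq_sum_C_mul_T hsupp, show Finset.Icc (1 : ℤ) 2 = {1, 2} by rfl,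
      Finset.sum_pair (by norm_num), h1]
    exact isStarFamily_C_mul_T_one_add_C_mul_T_two (by linear_combination hnext)
  have h2 : f.coeff 2 = -(u * v - 1) := by
    rw [if_neg (by omega)] at hnext
    linear_combination (mul_eq_zero.mp hnext).resolve_right hfN
  obtain ⟨g, rfl, hgsupp, hgN⟩ := exists_eq_T_two_mul_sub hsupp (by omega) h1 h2
  have hcast : ((N - 2 : ℕ) : ℤ) = N - 2 := by omega
  refine (ih (N - 2) (by omega) g ((satStar_shift_iff g).mp hf) ?_ ?_).shift
  · rwa [hcast]
  · rwa [hcast, hgN]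

end Star

/-- A solution of (★) supported in strictly positive degrees belongs to one of
the four families (iv)–(vi) of Lemma 3.4 of the paper. -/
theorem statement9 {K : Type*} [Field K] (u v : K) (f : K[T;T⁻¹])
    (hf : SatStar u v f) (hsupp : ∀ n ∈ f.coeff.support, 0 < n) :
    ∃ d : ℕ,
      f = -(C u) * T (2 * (d : ℤ) + 1) - Rpoly u v d ∨
      f = C v * T (2 * (d : ℤ) + 1) - Rpoly u v d ∨
      f = C (u * v) * T (2 * (d : ℤ)) - Rpoly u v d ∨
      f = -T (2 * (d : ℤ)) - Rpoly u v d := by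
  rcases eq_or_ne f 0 with rfl | hf0
  · exact hf.isStarFamily_zero
  have hne : f.coeff.support.Nonempty := Finsupp.support_nonempty_iff.mpr (by simpa using hf0)
  set N := f.coeff.support.max' hne
  have hNpos : 0 < N := hsupp N (Finset.max'_mem _ _)
  lift N to ℕ using hNpos.le with n hn
  refine hf.isStarFamily_of_support_subset_Icc n f ?_ ?_
  · intro a ha
    exact Finset.mem_Icc.mpr ⟨hsupp a ha, hn ▸ Finset.le_max' _ a ha⟩
  · exact Finsupp.mem_support_iff.mp (hn ▸ Finset.max'_mem _ _)
end

section
/- Let g ∈ A be a unit and d ≥ 0 a natural number. Then: if w ∈ {u, −v} and T(g) = X^{−2d}·(R_d + b + w·X^{−1})·g, then T(X^{−d}·g) = (b + w·X^{−1})·(X^{−d}·g); and if w′ ∈ {−u, v} and T(g) = (w′·X^{2d+1} − R_d)·g, then T(X^{d+1}·g) = (b + (c + w′)·X^{−1})·(X^{d+1}·g), where c + w′ ∈ {−v, u}. -/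
/-!
Applying the Bernstein relation with `h = X^n` to `𝒯 g = F·g` gives `𝒯 (X^n·g) = G·X^n·g` as soon
as `(X² − 1)(X^{2n}·G − F) = (b·X² + c·X)(X^{2n} − 1)`. For `n = −d` and `n = d + 1` this reduces,
through the telescoping identity `(X² − 1)·R_d = (b·X² + c·X)(X^{2d} − 1)`, to an identity of
Laurent polynomials.
-/

open LaurentPolynomial

theorem LaurentPolynomial.T_two_sub_one_ne_zero {R : Type*} [Ring R] [Nontrivial R] :
    (T 2 - 1 : R[T;T⁻¹]) ≠ 0 := by
  intro h
  have h2 := congrArg (fun f : R[T;T⁻¹] => f.coeff 2) h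
  simp [← T_zero] at h2

theorem LaurentPolynomial.T_neg_mul_T_two_mul {R : Type*} [Semiring R] (n : ℤ) :
    (T (-n) * T (2 * n) : R[T;T⁻¹]) = T n := by
  rw [← T_add]
  ring_nf

noncomputable abbrev bernsteinFactor {K : Type*} [Field K] (u v : K) : K[T;T⁻¹] :=
  C (u * v - 1) * T 2 + C (u - v) * T 1

theorem T_two_sub_one_mul_Rpoly {K : Type*} [Field K] (u v : K) (d : ℕ) :
    (T 2 - 1) * Rpoly u v d = bernsteinFactor u v * (T (2 * (d : ℤ)) - 1) := by
  induction d with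
  | zero => simp [Rpoly]
  | succ n ih =>
    rw [Rpoly, Finset.sum_range_succ, ← Rpoly, mul_add, ih]
    push_cast
    simp only [mul_add, mul_one, T_add]
    ring

def SatisfiesBernstein {K : Type*} [Field K] (u v : K) (𝒯 : K[T;T⁻¹] →ₗ[K] K[T;T⁻¹]) : Prop :=
  ∀ h x : K[T;T⁻¹], (T 2 - 1) * (𝒯 (h * x) - invert h * 𝒯 x) = bernsteinFactor u v * (h - invert h) * x

namespace SatisfiesBernstein

variable {K : Type*} [Field K] {u v : K} {𝒯 : K[T;T⁻¹] →ₗ[K] K[T;T⁻¹]}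

theorem map_T_mul_eq_of_map_eq (h𝒯 : SatisfiesBernstein u v 𝒯) {n : ℤ} {g F G : K[T;T⁻¹]}
    (hF : 𝒯 g = F * g)
    (hFG : (T 2 - 1) * (T (2 * n) * G - F) = bernsteinFactor u v * (T (2 * n) - 1)) :
    𝒯 (T n * g) = G * (T n * g) := by
  have hB := h𝒯 (T n) g
  rw [invert_T, hF] at hB
  refine mul_left_cancel₀ T_two_sub_one_ne_zero ?_
  linear_combination hB - T (-n) * g * hFG
    + ((T 2 - 1) * G - bernsteinFactor u v) * g * T_neg_mul_T_two_mul (R := K) n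

end SatisfiesBernstein

theorem statement15_general {K : Type*} [Field K] (u v : K)
    (𝒯 : K[T;T⁻¹] →ₗ[K] K[T;T⁻¹])
    (hcomm : ∀ h x : K[T;T⁻¹],
      (T 2 - 1) * (𝒯 (h * x) - invert h * 𝒯 x)
        = (C (u * v - 1) * T 2 + C (u - v) * T 1) * (h - invert h) * x)
    (g : K[T;T⁻¹]) (d : ℕ) :
    (∀ w : K, (w = u ∨ w = -v) →
      𝒯 g = T (-(2 * (d : ℤ))) * (Rpoly u v d + C (u * v - 1) + C w * T (-1)) * g →
      𝒯 (T (-(d : ℤ)) * g) = (C (u * v - 1) + C w * T (-1)) * (T (-(d : ℤ)) * g)) ∧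
    (∀ w' : K, (w' = -u ∨ w' = v) →
      𝒯 g = (C w' * T (2 * (d : ℤ) + 1) - Rpoly u v d) * g →
      𝒯 (T ((d : ℤ) + 1) * g)
          = (C (u * v - 1) + C (u - v + w') * T (-1)) * (T ((d : ℤ) + 1) * g)
        ∧ (u - v + w' = -v ∨ u - v + w' = u)) := by
  have h𝒯 : SatisfiesBernstein u v 𝒯 := hcomm
  have hR := T_two_sub_one_mul_Rpoly u v d
  refine ⟨fun w _ hg => h𝒯.map_T_mul_eq_of_map_eq hg ?_, fun w' hw' hg => ⟨?_, ?_⟩⟩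
  · have h2d : (T (-(2 * (d : ℤ))) * T (2 * (d : ℤ)) : K[T;T⁻¹]) = 1 := by
      rw [← T_add, neg_add_cancel, T_zero]
    rw [show 2 * -(d : ℤ) = -(2 * d) by ring]
    linear_combination -T (-(2 * (d : ℤ))) * hR - bernsteinFactor u v * h2d
  · refine h𝒯.map_T_mul_eq_of_map_eq hg ?_
    rw [show 2 * ((d : ℤ) + 1) = 2 * d + 1 + 1 by ring, T_add, T_add (2 * (d : ℤ)) 1]
    have h1 : (T 1 * T (-1) : K[T;T⁻¹]) = 1 := by rw [← T_add, add_neg_cancel, T_zero]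
    have h2 : (T 2 : K[T;T⁻¹]) = T 1 * T 1 := by rw [← T_add]; norm_num
    rw [map_add C (u - v) w']
    linear_combination hR + (T 2 - 1) * T (2 * (d : ℤ)) * T 1 * (C (u - v) + C w') * h1
      + T (2 * (d : ℤ)) * (C (u * v - 1) + C (u - v) * T 1) * h2
  · rcases hw' with rfl | rfl
    · left; ring
    · right; ring

/-- Let `𝒯` satisfy the quadratic relation `𝒯² = b·𝒯 + Q·id` and the
denominator-cleared Bernstein relation. If `g` is a unit, `w ∈ {u, −v}` and
`𝒯(g) = X^{−2d}·(R_d + b + w·X^{−1})·g`, then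
`𝒯(X^{−d}·g) = (b + w·X⁻¹)·(X^{−d}·g)`; and if `w′ ∈ {−u, v}` and
`𝒯(g) = (w′·X^{2d+1} − R_d)·g`, then
`𝒯(X^{d+1}·g) = (b + (c + w′)·X⁻¹)·(X^{d+1}·g)`, where `c + w′ ∈ {−v, u}`. -/
theorem statement15 {K : Type*} [Field K] (u v : K)
    (𝒯 : K[T;T⁻¹] →ₗ[K] K[T;T⁻¹])
    (hquad : ∀ x : K[T;T⁻¹], 𝒯 (𝒯 x) = C (u * v - 1) * 𝒯 x + C (u * v) * x)
    (hcomm : ∀ h x : K[T;T⁻¹],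
      (T 2 - 1) * (𝒯 (h * x) - invert h * 𝒯 x)
        = (C (u * v - 1) * T 2 + C (u - v) * T 1) * (h - invert h) * x)
    (g : K[T;T⁻¹]) (hg : IsUnit g) (d : ℕ) :
    (∀ w : K, (w = u ∨ w = -v) →
      𝒯 g = T (-(2 * (d : ℤ))) * (Rpoly u v d + C (u * v - 1) + C w * T (-1)) * g →
      𝒯 (T (-(d : ℤ)) * g) = (C (u * v - 1) + C w * T (-1)) * (T (-(d : ℤ)) * g)) ∧
    (∀ w' : K, (w' = -u ∨ w' = v) →
      𝒯 g = (C w' * T (2 * (d : ℤ) + 1) - Rpoly u v d) * g →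
      𝒯 (T ((d : ℤ) + 1) * g)
          = (C (u * v - 1) + C (u - v + w') * T (-1)) * (T ((d : ℤ) + 1) * g)
        ∧ (u - v + w' = -v ∨ u - v + w' = u)) :=
  statement15_general u v 𝒯 hcomm g d
end
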